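/- arXiv:0911.5694 — 2 statements merged into one kernel-verified Lean document; each statement's English description precedes it below -/
import Mathlib

section
/- There is a bijection between the minimal coset representatives of C_n/A_{n-1} of length ℓ and strict partitions λ = (λ_1 > λ_2 > ... > λ_m > 0) with λ_1 ≤ n and Σλ_i = ℓ. -/
open Equiv Finset

/-- The signed adjacent transposition `s_i` (for `1 ≤ i`), acting on `ℤ` by swapping
`i, i+1` and simultaneously `-i, -(i+1)`. -/
def sgnSwap (i : ℕ) : Equiv.Perm ℤ :=
  Equiv.swap (i : ℤ) ((i : ℤ) + 1) * Equiv.swap (-(i : ℤ)) (-((i : ℤ) + 1))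

/-- The Coxeter generating set of the hyperoctahedral group `C_n`, realized as signed
permutations of `{±1, …, ±n}` inside `Equiv.Perm ℤ`: the signed adjacent transpositions
`s_1, …, s_(n-1)` together with the sign change `s_n = (n, -n)`. -/
def genC (n : ℕ) : Set (Equiv.Perm ℤ) :=
  {g | (∃ i : ℕ, 1 ≤ i ∧ i + 1 ≤ n ∧ g = sgnSwap i) ∨ g = Equiv.swap (n : ℤ) (-(n : ℤ))}

/-- The word length of `w` with respect to a generating set `S`
(the Coxeter length, when `S` is the set of simple reflections). -/
noncomputable def wordLen (S : Set (Equiv.Perm ℤ)) (w : Equiv.Perm ℤ) : ℕ :=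
  sInf {k | ∃ L : List (Equiv.Perm ℤ), L.length = k ∧ (∀ g ∈ L, g ∈ S) ∧ L.prod = w}

/-!
Realize `C_n` as the signed permutations of `ℤ` that fix every `x` with `|x| > n`. The Coxeter
length of such a `u` is its number `invCount` of type-C inversions: right multiplication by a
generator changes `invCount` by exactly one, and every `u ≠ 1` has a generator that lowers it.
Consequently `w` is a minimal coset representative iff its inverse window `w⁻¹ 1, …, w⁻¹ n`
increases in the order `1 < ⋯ < n < -n < ⋯ < -1`. Such a window is determined by which of its
entries are negative, every sign pattern occurs (bubble sort), and the negative entry `-a`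
contributes exactly `n + 1 - a` inversions. So the parts of the strict partition are the numbers
`n + 1 - a` with `w a < 0`.
-/

theorem StrictMonoOn.eqOn_of_image_eq {α β : Type*} [LinearOrder α] [LinearOrder β]
    [DecidableEq β] {s : Finset α} {f g : α → β} (hf : StrictMonoOn f s) (hg : StrictMonoOn g s)
    (h : s.image f = s.image g) : Set.EqOn f g s := by
  intro x hx
  set e := s.orderEmbOfFin rfl
  obtain ⟨i, rfl⟩ : x ∈ Set.range e := by rwa [range_orderEmbOfFin]
  have hcard : (s.image g).card = s.card := card_image_of_injOn hg.injOn
  -- both `f ∘ e` and `g ∘ e` enumerate `s.image g` in increasing order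
  have hsorted : ∀ φ : α → β, StrictMonoOn φ s → (∀ y ∈ s, φ y ∈ s.image g) →
      φ ∘ e = (s.image g).orderEmbOfFin hcard := fun φ hφ hmem =>
    orderEmbOfFin_unique hcard (fun j => hmem _ (orderEmbOfFin_mem s rfl j))
      fun _ _ hjk => hφ (orderEmbOfFin_mem s rfl _) (orderEmbOfFin_mem s rfl _) (e.strictMono hjk)
  exact congrFun ((hsorted f hf fun y hy => h ▸ mem_image_of_mem f hy).trans
    (hsorted g hg fun y hy => mem_image_of_mem g hy).symm) i

theorem Finset.sum_eq_sum_sdiff_pair_add {ι M : Type*} [AddCommMonoid M] [DecidableEq ι]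
    {s : Finset ι} {a b : ι} (ha : a ∈ s) (hb : b ∈ s) (hab : a ≠ b) (f : ι → M) :
    ∑ x ∈ s, f x = ∑ x ∈ s \ {a, b}, f x + (f a + f b) := by
  rw [← sum_pair hab, sum_sdiff (insert_subset_iff.2 ⟨ha, singleton_subset_iff.2 hb⟩)]

section WordLength

variable {S : Set (Perm ℤ)} {w : Perm ℤ}

theorem exists_list_prod_eq_of_mem_closure (hS : ∀ g ∈ S, g⁻¹ ∈ S) (hw : w ∈ Subgroup.closure S) :
    ∃ L : List (Perm ℤ), (∀ g ∈ L, g ∈ S) ∧ L.prod = w := by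
  rw [← Subgroup.mem_toSubmonoid, Subgroup.closure_toSubmonoid] at hw
  obtain ⟨L, hL, rfl⟩ := Submonoid.exists_list_of_mem_closure hw
  exact ⟨L, fun g hg => (hL g hg).elim id fun h => inv_inv g ▸ hS _ h, rfl⟩

theorem exists_length_eq_wordLen (hS : ∀ g ∈ S, g⁻¹ ∈ S) (hw : w ∈ Subgroup.closure S) :
    ∃ L : List (Perm ℤ), L.length = wordLen S w ∧ (∀ g ∈ L, g ∈ S) ∧ L.prod = w := by
  obtain ⟨L, hL, hprod⟩ := exists_list_prod_eq_of_mem_closure hS hw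
  have hne : {k | ∃ L : List (Perm ℤ), L.length = k ∧ (∀ g ∈ L, g ∈ S) ∧ L.prod = w}.Nonempty :=
    ⟨_, L, rfl, hL, hprod⟩
  exact Nat.sInf_mem hne

theorem wordLen_prod_le {L : List (Perm ℤ)} (hL : ∀ g ∈ L, g ∈ S) : wordLen S L.prod ≤ L.length :=
  Nat.sInf_le ⟨L, rfl, hL, rfl⟩

theorem wordLen_one : wordLen S 1 = 0 :=
  Nat.le_zero.1 (wordLen_prod_le (L := []) (by simp))

theorem wordLen_mul_le (hS : ∀ g ∈ S, g⁻¹ ∈ S) (hw : w ∈ Subgroup.closure S) {g : Perm ℤ}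
    (hg : g ∈ S) : wordLen S (w * g) ≤ wordLen S w + 1 := by
  obtain ⟨L, hlen, hL, rfl⟩ := exists_length_eq_wordLen hS hw
  have := wordLen_prod_le (L := L ++ [g]) (by simpa [or_imp, forall_and] using ⟨hL, hg⟩)
  simpa [hlen] using this

theorem wordLen_inv (hS : ∀ g ∈ S, g⁻¹ ∈ S) (w : Perm ℤ) : wordLen S w⁻¹ = wordLen S w := by
  suffices h : ∀ (w : Perm ℤ) (k : ℕ),
      (∃ L : List (Perm ℤ), L.length = k ∧ (∀ g ∈ L, g ∈ S) ∧ L.prod = w) →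
      ∃ L : List (Perm ℤ), L.length = k ∧ (∀ g ∈ L, g ∈ S) ∧ L.prod = w⁻¹ by
    unfold wordLen
    congr 1
    ext k
    exact ⟨fun hk => inv_inv w ▸ h _ k hk, h w k⟩
  rintro w k ⟨L, rfl, hL, rfl⟩
  refine ⟨(L.map (·⁻¹)).reverse, by simp, ?_, (List.prod_inv_reverse L).symm⟩
  simp only [List.mem_reverse, List.mem_map]
  rintro _ ⟨g, hg, rfl⟩
  exact hS g (hL g hg)

end WordLength

namespace Hyperoctahedral

structure IsSignedPerm (n : ℕ) (u : Perm ℤ) : Prop where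
  map_neg : ∀ x, u (-x) = -u x
  apply_of_lt_abs : ∀ x, (n : ℤ) < |x| → u x = x

section SignedPerm

variable {n : ℕ} {u v : Perm ℤ}

namespace IsSignedPerm

theorem one (n : ℕ) : IsSignedPerm n 1 := ⟨fun _ => rfl, fun _ _ => rfl⟩

theorem mul (hu : IsSignedPerm n u) (hv : IsSignedPerm n v) : IsSignedPerm n (u * v) :=
  ⟨fun x => by simp only [Perm.mul_apply, hv.map_neg, hu.map_neg],
    fun x hx => by simp only [Perm.mul_apply, hv.apply_of_lt_abs x hx, hu.apply_of_lt_abs x hx]⟩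

theorem inv (hu : IsSignedPerm n u) : IsSignedPerm n u⁻¹ :=
  ⟨fun x => u.injective (by simp [hu.map_neg]),
    fun x hx => u.injective (by simp [hu.apply_of_lt_abs x hx])⟩

theorem map_zero (hu : IsSignedPerm n u) : u 0 = 0 := by
  have := hu.map_neg 0
  rw [neg_zero] at this
  omega

theorem apply_ne_zero (hu : IsSignedPerm n u) {x : ℤ} (hx : x ≠ 0) : u x ≠ 0 :=
  fun h => hx (u.injective (h.trans hu.map_zero.symm))

theorem one_le_of_apply_ne_zero (hu : IsSignedPerm n u) (h : u n ≠ 0) : 1 ≤ n := by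
  by_contra hn
  exact h (by simpa [show n = 0 by omega] using hu.map_zero)

theorem apply_mem_Icc (hu : IsSignedPerm n u) {x : ℤ} (h₁ : -n ≤ x) (h₂ : x ≤ n) :
    -n ≤ u x ∧ u x ≤ n := by
  by_contra h
  have hux : u x = x := u.injective (hu.apply_of_lt_abs (u x) (lt_abs.2 (by omega)))
  omega

theorem apply_bounds (hu : IsSignedPerm n u) {i : ℤ} (hi : i ∈ Icc (1 : ℤ) n) :
    -n ≤ u i ∧ u i ≤ n ∧ u i ≠ 0 := by
  rw [mem_Icc] at hi
  exact ⟨(hu.apply_mem_Icc (by omega) hi.2).1, (hu.apply_mem_Icc (by omega) hi.2).2,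
    hu.apply_ne_zero (by omega)⟩

theorem ext_window (hu : IsSignedPerm n u) (hv : IsSignedPerm n v)
    (h : ∀ i ∈ Icc (1 : ℤ) n, u i = v i) : u = v := by
  ext x
  rcases lt_trichotomy x 0 with hx | rfl | hx
  · by_cases hxn : -x ≤ n
    · rw [← neg_neg x, hu.map_neg, hv.map_neg, h (-x) (mem_Icc.2 ⟨by omega, hxn⟩)]
    · rw [hu.apply_of_lt_abs x (lt_abs.2 (by omega)), hv.apply_of_lt_abs x (lt_abs.2 (by omega))]
  · rw [hu.map_zero, hv.map_zero]
  · by_cases hxn : x ≤ n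
    · exact h x (mem_Icc.2 ⟨hx, hxn⟩)
    · rw [hu.apply_of_lt_abs x (lt_abs.2 (by omega)), hv.apply_of_lt_abs x (lt_abs.2 (by omega))]

end IsSignedPerm

def signedPerms (n : ℕ) : Subgroup (Perm ℤ) where
  carrier := {u | IsSignedPerm n u}
  mul_mem' := IsSignedPerm.mul
  one_mem' := IsSignedPerm.one n
  inv_mem' := IsSignedPerm.inv

theorem isSignedPerm_of_mem_genC {g : Perm ℤ} (hg : g ∈ genC n) : IsSignedPerm n g := by
  rcases hg with ⟨i, hi₁, hi₂, rfl⟩ | rfl <;> refine ⟨fun x => ?_, fun x hx => ?_⟩ <;>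
    (try rw [lt_abs] at hx) <;> simp only [sgnSwap, Perm.mul_apply, swap_apply_def] <;>
    split_ifs <;> omega

theorem IsSignedPerm.of_mem_closure {w : Perm ℤ} (hw : w ∈ Subgroup.closure (genC n)) :
    IsSignedPerm n w :=
  (Subgroup.closure_le (signedPerms n)).2 (fun _ => isSignedPerm_of_mem_genC) hw

end SignedPerm

/-- The position of `v` in the order `1 < 2 < ⋯ < n < -n < ⋯ < -1`. The minimal coset
representatives `w` are exactly those for which `rank n ∘ w⁻¹` increases on `1, …, n`. -/
def rank (n : ℕ) (v : ℤ) : ℤ := if 0 < v then v else v + (2 * n + 1)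

def rankInv (n : ℕ) (a b : ℤ) : ℕ := if rank n b < rank n a then 1 else 0

/-- The inversions of `u` at the position pairs `(i, j)` and `(i, -j)` for `i < j`, and at
`(i, -i)`; summed over `1 ≤ i, j ≤ n` they give the Coxeter length (`wordLen_eq_invCount`). -/
def invTerm (n : ℕ) (u : ℤ → ℤ) (p : ℤ × ℤ) : ℕ :=
  if p.1 < p.2 then rankInv n (u p.1) (u p.2) + rankInv n (u p.1) (-u p.2)
  else if p.1 = p.2 then rankInv n (u p.1) (-u p.1) else 0

noncomputable def invCount (n : ℕ) (u : Perm ℤ) : ℕ :=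
  ∑ p ∈ Icc (1 : ℤ) n ×ˢ Icc (1 : ℤ) n, invTerm n u p

section InvCount

variable {n : ℕ} {u : Perm ℤ}

theorem rank_of_pos {v : ℤ} (h : 0 < v) : rank n v = v := if_pos h

theorem rank_injOn : Set.InjOn (rank n) {a | -n ≤ a ∧ a ≤ n ∧ a ≠ 0} := by
  rintro a ⟨ha, ha', ha₀⟩ b ⟨hb, hb', hb₀⟩ h
  simp only [rank] at h
  split_ifs at h <;> omega

theorem rank_apply_ne (hu : IsSignedPerm n u) {i j : ℤ} (hi : i ∈ Icc (1 : ℤ) n)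
    (hj : j ∈ Icc (1 : ℤ) n) (hij : i ≠ j) : rank n (u i) ≠ rank n (u j) :=
  fun h => hij (u.injective (rank_injOn (hu.apply_bounds hi) (hu.apply_bounds hj) h))

theorem rankInv_add_rankInv_neg_of_rank_lt {a b : ℤ} (ha : -n ≤ a ∧ a ≤ n ∧ a ≠ 0)
    (hb : -n ≤ b ∧ b ≤ n ∧ b ≠ 0) (h : rank n a < rank n b) :
    rankInv n b a + rankInv n b (-a) = rankInv n a b + rankInv n a (-b) + 1 := by
  simp only [rankInv, rank] at h ⊢
  split_ifs at h ⊢ <;> omega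

theorem invTerm_congr {u v : ℤ → ℤ} {p : ℤ × ℤ} (h₁ : u p.1 = v p.1) (h₂ : u p.2 = v p.2) :
    invTerm n u p = invTerm n v p := by
  simp only [invTerm, h₁, h₂]

theorem invCount_one : invCount n 1 = 0 := by
  refine Finset.sum_eq_zero fun p hp => ?_
  simp only [mem_product, mem_Icc] at hp
  simp only [invTerm, rankInv, rank, Perm.one_apply]
  grind

theorem sgnSwap_apply_of_pos (i : ℕ) {x : ℤ} (hx : 0 < x) :
    sgnSwap i x = swap (i : ℤ) (i + 1) x := by
  simp only [sgnSwap, Perm.mul_apply]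
  rw [swap_apply_of_ne_of_ne (a := -(i : ℤ))] <;> omega

/-- On the window `u * sgnSwap i` acts as `u ∘ swap i (i + 1)`. -/
theorem invCount_mul_sgnSwap_eq_sum {i : ℕ} (hi₁ : 1 ≤ i) (hi₂ : i + 1 ≤ n) (u : Perm ℤ) :
    invCount n (u * sgnSwap i) = ∑ p ∈ Icc (1 : ℤ) n ×ˢ Icc (1 : ℤ) n,
      invTerm n (u ∘ swap (i : ℤ) (i + 1))
        (swap (i : ℤ) (i + 1) p.1, swap (i : ℤ) (i + 1) p.2) := by
  set σ := swap (i : ℤ) (i + 1) with hσ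
  set s := Icc (1 : ℤ) n ×ˢ Icc (1 : ℤ) n
  have hσs : ∀ p, p ∈ s ↔ σ.prodCongr σ p ∈ s := by
    intro p
    simp only [s, mem_product, mem_Icc, prodCongr_apply, Prod.map, hσ, swap_apply_def]
    split_ifs <;> omega
  have hreindex : ∑ p ∈ s, invTerm n (u ∘ σ) (σ p.1, σ p.2) = ∑ p ∈ s, invTerm n (u ∘ σ) p :=
    Finset.sum_equiv (σ.prodCongr σ) hσs fun _ _ => rfl
  rw [hreindex]
  refine Finset.sum_congr rfl fun p hp => invTerm_congr ?_ ?_ <;>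
    simp only [s, mem_product, mem_Icc] at hp <;>
    simp only [Perm.mul_apply, Function.comp_apply] <;> rw [sgnSwap_apply_of_pos i (by omega)]

theorem invCount_mul_sgnSwap_add {i : ℕ} (hi₁ : 1 ≤ i) (hi₂ : i + 1 ≤ n) (u : Perm ℤ) :
    invCount n (u * sgnSwap i) + (rankInv n (u i) (u (i + 1)) + rankInv n (u i) (-u (i + 1)))
      = invCount n u + (rankInv n (u (i + 1)) (u i) + rankInv n (u (i + 1)) (-u i)) := by
  classical
  rw [invCount_mul_sgnSwap_eq_sum hi₁ hi₂, invCount]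
  set σ := swap (i : ℤ) (i + 1) with hσ
  set s := Icc (1 : ℤ) n ×ˢ Icc (1 : ℤ) n
  have hoff : ∀ p ∈ s \ {((i : ℤ), (i : ℤ) + 1), ((i : ℤ) + 1, (i : ℤ))},
      invTerm n (u ∘ σ) (σ p.1, σ p.2) = invTerm n u p := by
    intro p hp
    simp only [mem_sdiff, mem_insert, mem_singleton, Prod.ext_iff] at hp
    simp only [invTerm, Function.comp_apply, hσ, swap_apply_def]
    grind
  have hmem₁ : ((i : ℤ), (i : ℤ) + 1) ∈ s := by simp [s]; omega
  have hmem₂ : ((i : ℤ) + 1, (i : ℤ)) ∈ s := by simp [s]; omega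
  have hσi : σ i = i + 1 := swap_apply_left _ _
  have hσi' : σ (i + 1) = i := swap_apply_right _ _
  have h₁ : invTerm n (u ∘ σ) (σ i, σ (i + 1)) = 0 := by simp [invTerm, hσi, hσi']
  have h₂ : invTerm n (u ∘ σ) (σ (i + 1), σ i)
      = rankInv n (u (i + 1)) (u i) + rankInv n (u (i + 1)) (-u i) := by
    simp [invTerm, hσi, hσi']
  have h₃ : invTerm n u (i, i + 1)
      = rankInv n (u i) (u (i + 1)) + rankInv n (u i) (-u (i + 1)) := by
    simp [invTerm]
  have h₄ : invTerm n u (i + 1, i) = 0 := by simp [invTerm]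
  rw [sum_eq_sum_sdiff_pair_add hmem₁ hmem₂ (by simp),
    sum_eq_sum_sdiff_pair_add hmem₁ hmem₂ (by simp), Finset.sum_congr rfl hoff]
  simp only [h₁, h₂, h₃, h₄]
  ring

theorem invCount_mul_sgnSwap_of_rank_lt (hu : IsSignedPerm n u) {i : ℕ} (hi₁ : 1 ≤ i)
    (hi₂ : i + 1 ≤ n) (h : rank n (u i) < rank n (u (i + 1))) :
    invCount n (u * sgnSwap i) = invCount n u + 1 := by
  have := invCount_mul_sgnSwap_add hi₁ hi₂ u
  rw [rankInv_add_rankInv_neg_of_rank_lt (hu.apply_bounds (by simp; omega))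
    (hu.apply_bounds (by simp; omega)) h] at this
  omega

theorem invCount_mul_sgnSwap_of_rank_gt (hu : IsSignedPerm n u) {i : ℕ} (hi₁ : 1 ≤ i)
    (hi₂ : i + 1 ≤ n) (h : rank n (u (i + 1)) < rank n (u i)) :
    invCount n (u * sgnSwap i) + 1 = invCount n u := by
  have := invCount_mul_sgnSwap_add hi₁ hi₂ u
  rw [rankInv_add_rankInv_neg_of_rank_lt (hu.apply_bounds (by simp; omega))
    (hu.apply_bounds (by simp; omega)) h] at this
  omega

theorem invCount_mul_swap_neg_add (hn : 1 ≤ n) (hu : IsSignedPerm n u) :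
    invCount n (u * swap (n : ℤ) (-n)) + rankInv n (u n) (-u n)
      = invCount n u + rankInv n (-u n) (u n) := by
  classical
  set c := swap (n : ℤ) (-n)
  set s := Icc (1 : ℤ) n ×ˢ Icc (1 : ℤ) n
  have hcn : (u * c) n = -u n := by
    rw [Perm.mul_apply, swap_apply_left, hu.map_neg]
  have hc : ∀ x : ℤ, 0 < x → x ≠ n → (u * c) x = u x := by
    intro x hx hxn
    rw [Perm.mul_apply, swap_apply_of_ne_of_ne hxn (by omega)]
  -- only the value at position `n` changes sign, which swaps the two summands of each `(i, n)`
  have hoff : ∀ p ∈ s.erase ((n : ℤ), (n : ℤ)), invTerm n ⇑(u * c) p = invTerm n u p := by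
    rintro ⟨a, b⟩ hp
    simp only [s, mem_erase, mem_product, mem_Icc, ne_eq, Prod.mk.injEq] at hp
    by_cases hb : b = n
    · subst hb
      have ha : a < n := by omega
      simp only [invTerm, if_pos ha, hcn, hc a (by omega) ha.ne, neg_neg]
      ring
    · by_cases ha : a = n
      · simp only [invTerm, ha, if_neg (show ¬(n : ℤ) < b by omega), if_neg (Ne.symm hb)]
      · exact invTerm_congr (hc a (by omega) ha) (hc b (by omega) hb)
  have hnn : ((n : ℤ), (n : ℤ)) ∈ s := by simp [s]; omega
  have h₁ : invTerm n ⇑(u * c) (n, n) = rankInv n (-u n) (u n) := by simp [invTerm, hcn]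
  have h₂ : invTerm n u (n, n) = rankInv n (u n) (-u n) := by simp [invTerm]
  rw [invCount, invCount, ← Finset.sum_erase_add _ _ hnn, ← Finset.sum_erase_add _ _ hnn,
    Finset.sum_congr rfl hoff, h₁, h₂]
  ring

theorem invCount_mul_swap_neg_of_neg (hu : IsSignedPerm n u) (h : u n < 0) :
    invCount n (u * swap (n : ℤ) (-n)) + 1 = invCount n u := by
  have hflip := invCount_mul_swap_neg_add (hu.one_le_of_apply_ne_zero h.ne) hu
  have := hu.apply_bounds (i := n) (by simp [hu.one_le_of_apply_ne_zero (by omega)])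
  simp only [rankInv, rank] at hflip
  grind

theorem invCount_mul_swap_neg_of_pos (hu : IsSignedPerm n u) (h : 0 < u n) :
    invCount n (u * swap (n : ℤ) (-n)) = invCount n u + 1 := by
  have hflip := invCount_mul_swap_neg_add (hu.one_le_of_apply_ne_zero h.ne') hu
  have := hu.apply_bounds (i := n) (by simp [hu.one_le_of_apply_ne_zero (by omega)])
  simp only [rankInv, rank] at hflip
  grind

theorem invCount_mul_le (hu : IsSignedPerm n u) {g : Perm ℤ} (hg : g ∈ genC n) :
    invCount n (u * g) ≤ invCount n u + 1 := by
  rcases hg with ⟨i, hi₁, hi₂, rfl⟩ | rfl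
  · rcases lt_or_gt_of_ne (rank_apply_ne hu (i := i) (j := i + 1) (by simp; omega)
      (by simp; omega) (by omega)) with h | h
    · exact (invCount_mul_sgnSwap_of_rank_lt hu hi₁ hi₂ h).le
    · have := invCount_mul_sgnSwap_of_rank_gt hu hi₁ hi₂ h
      omega
  · rcases lt_trichotomy (u n) 0 with h | h | h
    · have := invCount_mul_swap_neg_of_neg hu h
      omega
    · have hn : n = 0 := by
        by_contra hn
        exact hu.apply_ne_zero (x := n) (by omega) h
      simp [invCount, hn]
    · exact (invCount_mul_swap_neg_of_pos hu h).le

end InvCount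

section Generators

variable {n : ℕ} {g : Perm ℤ}

theorem genC_mul_self (hg : g ∈ genC n) : g * g = 1 := by
  rcases hg with ⟨i, hi, -, rfl⟩ | rfl
  · ext x
    simp only [sgnSwap, Perm.mul_apply, Perm.one_apply, swap_apply_def]
    split_ifs <;> omega
  · exact swap_mul_self _ _

theorem genC_inv (hg : g ∈ genC n) : g⁻¹ = g :=
  inv_eq_of_mul_eq_one_right (genC_mul_self hg)

theorem inv_mem_genC (hg : g ∈ genC n) : g⁻¹ ∈ genC n :=
  (genC_inv hg).symm ▸ hg

theorem invCount_le_wordLen {w : Perm ℤ} (hw : w ∈ Subgroup.closure (genC n)) :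
    invCount n w ≤ wordLen (genC n) w := by
  obtain ⟨L, hlen, hL, rfl⟩ := exists_length_eq_wordLen (fun _ => inv_mem_genC) hw
  rw [← hlen]
  clear hlen hw
  induction L using List.reverseRecOn with
  | nil => simp [invCount_one]
  | append_singleton L g ih =>
    simp only [List.mem_append, List.mem_singleton, or_imp, forall_and, forall_eq] at hL
    have hsp : IsSignedPerm n L.prod := .of_mem_closure
      (Subgroup.list_prod_mem _ fun x hx => Subgroup.subset_closure (hL.1 x hx))
    rw [List.prod_append, List.prod_singleton, List.length_append, List.length_singleton]
    exact (invCount_mul_le hsp hL.2).trans (by have := ih hL.1; omega)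

end Generators

def IsRankSorted (n : ℕ) (u : Perm ℤ) : Prop :=
  StrictMonoOn (fun i => rank n (u i)) (Icc (1 : ℤ) n : Set ℤ)

section RankSorted

variable {n : ℕ} {u v : Perm ℤ}

theorem isRankSorted_iff :
    IsRankSorted n u ↔ ∀ i : ℕ, 1 ≤ i → i + 1 ≤ n → rank n (u i) < rank n (u (i + 1)) := by
  refine ⟨fun hs i hi₁ hi₂ => hs (by simp; omega) (by simp; omega) (by omega), fun h => ?_⟩
  refine strictMonoOn_of_lt_succ (by rw [coe_Icc]; exact Set.ordConnected_Icc) fun a _ ha ha' => ?_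
  simp only [Order.succ_eq_add_one, coe_Icc, Set.mem_Icc] at ha ha' ⊢
  have := h a.toNat (by omega) (by omega)
  rwa [Int.toNat_of_nonneg (by omega)] at this

theorem isRankSorted_one : IsRankSorted n 1 := by
  intro i hi j hj hij
  simp only [coe_Icc, Set.mem_Icc] at hi hj
  simp only [Perm.one_apply]
  rwa [rank_of_pos (by omega), rank_of_pos (by omega)]

theorem eq_of_isRankSorted_of_image_eq (hu : IsSignedPerm n u) (hv : IsSignedPerm n v)
    (hsu : IsRankSorted n u) (hsv : IsRankSorted n v)
    (h : (Icc (1 : ℤ) n).image u = (Icc (1 : ℤ) n).image v) : u = v := by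
  refine hu.ext_window hv fun i hi => rank_injOn (hu.apply_bounds hi) (hv.apply_bounds hi) ?_
  refine hsu.eqOn_of_image_eq hsv ?_ hi
  rw [← Function.comp_def, ← Function.comp_def, ← image_image, h, image_image]

theorem eq_one_of_isRankSorted (hu : IsSignedPerm n u) (hs : IsRankSorted n u) (hn : 0 ≤ u n) :
    u = 1 := by
  -- a negative value sits after every positive one in rank order, so it could only be at `n`
  have hpos : ∀ i ∈ Icc (1 : ℤ) n, 0 < u i := by
    intro i hi
    have hi' := mem_Icc.1 hi
    have hn' : (n : ℤ) ∈ Icc (1 : ℤ) n := mem_Icc.2 ⟨by omega, le_rfl⟩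
    have hwi := hu.apply_bounds hi
    have hwn := hu.apply_bounds hn'
    by_contra hneg
    have hlt := hs hi hn' (lt_of_le_of_ne hi'.2 fun h => by subst h; omega)
    simp only [rank] at hlt
    split_ifs at hlt <;> omega
  refine eq_of_isRankSorted_of_image_eq hu (.one n) hs isRankSorted_one ?_
  rw [Perm.coe_one, image_id]
  refine eq_of_subset_of_card_le (fun x hx => ?_) (card_image_of_injective _ u.injective).ge
  obtain ⟨i, hi, rfl⟩ := mem_image.1 hx
  have := hu.apply_bounds hi
  have := hpos i hi
  exact mem_Icc.2 ⟨by omega, by omega⟩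

theorem exists_descent_or_eq_one (hu : IsSignedPerm n u) :
    u = 1 ∨ ∃ g ∈ genC n, invCount n (u * g) + 1 = invCount n u := by
  by_cases hdes : ∃ i : ℕ, 1 ≤ i ∧ i + 1 ≤ n ∧ rank n (u (i + 1)) < rank n (u i)
  · obtain ⟨i, hi₁, hi₂, h⟩ := hdes
    exact Or.inr ⟨_, Or.inl ⟨i, hi₁, hi₂, rfl⟩, invCount_mul_sgnSwap_of_rank_gt hu hi₁ hi₂ h⟩
  by_cases hneg : u n < 0
  · exact Or.inr ⟨_, Or.inr rfl, invCount_mul_swap_neg_of_neg hu hneg⟩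
  refine Or.inl (eq_one_of_isRankSorted hu (isRankSorted_iff.2 fun i hi₁ hi₂ => ?_) (by omega))
  have := rank_apply_ne hu (i := i) (j := i + 1) (by simp; omega) (by simp; omega) (by omega)
  simp only [not_exists, not_and, not_lt] at hdes
  exact lt_of_le_of_ne (hdes i hi₁ hi₂) this

end RankSorted

section Length

variable {n : ℕ} {u w : Perm ℤ}

theorem mem_closure_and_wordLen_le_invCount (hu : IsSignedPerm n u) :
    u ∈ Subgroup.closure (genC n) ∧ wordLen (genC n) u ≤ invCount n u := by
  induction hk : invCount n u using Nat.strong_induction_on generalizing u with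
  | _ k ih =>
  rcases exists_descent_or_eq_one hu with rfl | ⟨g, hg, hlt⟩
  · exact ⟨one_mem _, by rw [wordLen_one]; omega⟩
  obtain ⟨hcl, hlen⟩ := ih _ (by omega) (hu.mul (isSignedPerm_of_mem_genC hg)) rfl
  have hu' : u * g * g = u := by rw [mul_assoc, genC_mul_self hg, mul_one]
  refine ⟨hu' ▸ mul_mem hcl (Subgroup.subset_closure hg), ?_⟩
  have := wordLen_mul_le (fun _ => inv_mem_genC) hcl hg
  rw [hu'] at this
  omega

theorem mem_closure_genC_iff : w ∈ Subgroup.closure (genC n) ↔ IsSignedPerm n w :=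
  ⟨.of_mem_closure, fun hw => (mem_closure_and_wordLen_le_invCount hw).1⟩

theorem wordLen_eq_invCount (hu : IsSignedPerm n u) : wordLen (genC n) u = invCount n u :=
  le_antisymm (mem_closure_and_wordLen_le_invCount hu).2
    (invCount_le_wordLen (mem_closure_genC_iff.2 hu))

theorem wordLen_lt_wordLen_sgnSwap_mul_iff (hw : IsSignedPerm n w) {i : ℕ} (hi₁ : 1 ≤ i)
    (hi₂ : i + 1 ≤ n) :
    wordLen (genC n) w < wordLen (genC n) (sgnSwap i * w)
      ↔ rank n (w⁻¹ i) < rank n (w⁻¹ (i + 1)) := by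
  have hg : sgnSwap i ∈ genC n := Or.inl ⟨i, hi₁, hi₂, rfl⟩
  have hu := hw.inv
  rw [← wordLen_inv (fun _ => inv_mem_genC) w, ← wordLen_inv (fun _ => inv_mem_genC) (_ * w),
    mul_inv_rev, genC_inv hg, wordLen_eq_invCount hu,
    wordLen_eq_invCount (hu.mul (isSignedPerm_of_mem_genC hg))]
  rcases lt_or_gt_of_ne (rank_apply_ne hu (i := i) (j := i + 1) (by simp; omega)
    (by simp; omega) (by omega)) with h | h
  · simp only [invCount_mul_sgnSwap_of_rank_lt hu hi₁ hi₂ h, lt_add_one, h]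
  · have := invCount_mul_sgnSwap_of_rank_gt hu hi₁ hi₂ h
    exact iff_of_false (by omega) h.not_gt

end Length

def IsMinCosetRep (n : ℕ) (w : Perm ℤ) : Prop :=
  w ∈ Subgroup.closure (genC n) ∧
    ∀ i : ℕ, 1 ≤ i → i + 1 ≤ n → wordLen (genC n) w < wordLen (genC n) (sgnSwap i * w)

theorem isMinCosetRep_iff {n : ℕ} {w : Perm ℤ} :
    IsMinCosetRep n w ↔ IsSignedPerm n w⁻¹ ∧ IsRankSorted n w⁻¹ := by
  rw [IsMinCosetRep, mem_closure_genC_iff, isRankSorted_iff]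
  refine ⟨fun ⟨hw, hdes⟩ => ⟨hw.inv, fun i hi₁ hi₂ => ?_⟩, fun ⟨hu, hs⟩ => ?_⟩
  · exact (wordLen_lt_wordLen_sgnSwap_mul_iff hw hi₁ hi₂).1 (hdes i hi₁ hi₂)
  · have hw : IsSignedPerm n w := inv_inv w ▸ hu.inv
    exact ⟨hw, fun i hi₁ hi₂ => (wordLen_lt_wordLen_sgnSwap_mul_iff hw hi₁ hi₂).2 (hs i hi₁ hi₂)⟩

section SortedLength

variable {n : ℕ} {u : Perm ℤ}

theorem IsSignedPerm.injOn_abs (hu : IsSignedPerm n u) :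
    Set.InjOn (fun i => |u i|) (Icc (1 : ℤ) n : Set ℤ) := by
  intro i hi j hj h
  simp only [coe_Icc, Set.mem_Icc] at hi hj
  rcases abs_eq_abs.1 h with h | h
  · exact u.injective h
  · have := u.injective (h.trans (hu.map_neg j).symm)
    omega

theorem IsSignedPerm.image_abs (hu : IsSignedPerm n u) :
    (Icc (1 : ℤ) n).image (fun i => |u i|) = Icc (1 : ℤ) n := by
  refine eq_of_subset_of_card_le (fun x hx => ?_) (card_image_of_injOn hu.injOn_abs).ge
  obtain ⟨i, hi, rfl⟩ := mem_image.1 hx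
  obtain ⟨h₁, h₂, h₀⟩ := hu.apply_bounds hi
  exact mem_Icc.2 ⟨Int.one_le_abs h₀, abs_le.2 ⟨h₁, h₂⟩⟩

theorem IsSignedPerm.card_filter_lt_abs (hu : IsSignedPerm n u) {a : ℤ} (ha : 0 ≤ a)
    (han : a ≤ n) : (((Icc (1 : ℤ) n).filter (fun i => a < |u i|)).card : ℤ) = n - a := by
  have hfilter : (Icc (1 : ℤ) n).filter (a < ·) = Icc (a + 1) n := by
    ext x
    simp only [mem_filter, mem_Icc]
    omega
  rw [← card_image_of_injOn (hu.injOn_abs.mono (coe_subset.2 (filter_subset _ _))),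
    ← filter_image, hu.image_abs,
    hfilter, Int.card_Icc]
  omega

theorem invTerm_of_isRankSorted (hu : IsSignedPerm n u) (hs : IsRankSorted n u) {i j : ℤ}
    (hi : i ∈ Icc (1 : ℤ) n) (hj : j ∈ Icc (1 : ℤ) n) :
    invTerm n u (i, j) =
      if u j < 0 then (if -u j < |u i| then 1 else 0) + (if i = j then 1 else 0) else 0 := by
  have hwi := hu.apply_bounds hi
  have hwj := hu.apply_bounds hj
  have hi' : i ∈ (Icc (1 : ℤ) n : Set ℤ) := mem_coe.2 hi
  have hj' : j ∈ (Icc (1 : ℤ) n : Set ℤ) := mem_coe.2 hj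
  have hij : i < j → rank n (u i) < rank n (u j) := fun h => hs hi' hj' h
  have hji : j < i → rank n (u j) < rank n (u i) := fun h => hs hj' hi' h
  simp only [rank] at hij hji
  simp only [invTerm, rankInv, rank, lt_abs]
  grind

theorem sum_invTerm_of_isRankSorted (hu : IsSignedPerm n u) (hs : IsRankSorted n u) {j : ℤ}
    (hj : j ∈ Icc (1 : ℤ) n) :
    ((∑ i ∈ Icc (1 : ℤ) n, invTerm n u (i, j) : ℕ) : ℤ) = if u j < 0 then n + 1 + u j else 0 := by
  rw [sum_congr rfl fun i hi => invTerm_of_isRankSorted hu hs hi hj]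
  split_ifs with hneg
  · have := hu.apply_bounds hj
    rw [sum_add_distrib, sum_boole, sum_ite_eq' _ _ (fun _ => 1), if_pos hj, Nat.cast_add,
      Nat.cast_id, hu.card_filter_lt_abs (by omega) (by omega)]
    push_cast
    ring
  · simp

theorem invCount_eq_sum_of_isRankSorted (hu : IsSignedPerm n u) (hs : IsRankSorted n u) :
    (invCount n u : ℤ) = ∑ j ∈ (Icc (1 : ℤ) n).filter (fun j => u j < 0), ((n : ℤ) + 1 + u j) := by
  rw [invCount, sum_product_right, sum_filter, Nat.cast_sum]
  exact sum_congr rfl fun j hj => sum_invTerm_of_isRankSorted hu hs hj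

end SortedLength

def partitionOf (n : ℕ) (w : Perm ℤ) : Finset ℕ :=
  (Icc 1 n).filter (fun s : ℕ => w ((n : ℤ) + 1 - s) < 0)

section Partition

variable {n : ℕ} {u w w' : Perm ℤ}

theorem sum_partitionOf_inv (hu : IsSignedPerm n u) :
    ∑ s ∈ partitionOf n u⁻¹, (s : ℤ)
      = ∑ j ∈ (Icc (1 : ℤ) n).filter (fun j => u j < 0), ((n : ℤ) + 1 + u j) := by
  have h₁ : ∀ x, u (-u⁻¹ x) = -x := fun x => by simp [hu.map_neg]
  have h₂ : ∀ x, u⁻¹ (-u x) = -x := fun x => by simp [hu.inv.map_neg]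
  refine sum_nbij' (fun s => -u⁻¹ ((n : ℤ) + 1 - s)) (fun j => (n + 1 + u j).toNat)
    ?_ ?_ ?_ ?_ ?_ <;> intro x hx <;>
    simp only [partitionOf, mem_filter, mem_Icc] at hx ⊢
  · have := hu.inv.apply_bounds (i := n + 1 - x) (mem_Icc.2 (by omega))
    rw [h₁]
    omega
  · have := hu.apply_bounds (i := x) (mem_Icc.2 hx.1)
    rw [Int.toNat_of_nonneg (by omega), show (n : ℤ) + 1 - (n + 1 + u x) = -u x by ring, h₂]
    omega
  · rw [h₁]
    omega
  · have := hu.apply_bounds (i := x) (mem_Icc.2 hx.1)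
    rw [Int.toNat_of_nonneg (by omega), show (n : ℤ) + 1 - (n + 1 + u x) = -u x by ring, h₂,
      neg_neg]
  · rw [h₁]
    ring

theorem wordLen_eq_sum_partitionOf (hw : IsMinCosetRep n w) :
    wordLen (genC n) w = ∑ s ∈ partitionOf n w, s := by
  obtain ⟨hu, hs⟩ := isMinCosetRep_iff.1 hw
  have h := sum_partitionOf_inv hu
  rw [inv_inv] at h
  rw [← wordLen_inv (fun _ => inv_mem_genC), wordLen_eq_invCount hu]
  have key := (invCount_eq_sum_of_isRankSorted hu hs).trans h.symm
  rw [← Nat.cast_sum] at key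
  exact_mod_cast key

theorem IsSignedPerm.apply_mem_window_iff (hw : IsSignedPerm n w) (x : ℤ) :
    w x ∈ Icc (1 : ℤ) n ↔ (0 < x ∧ x ≤ n ∧ ¬w x < 0) ∨ (x < 0 ∧ -n ≤ x ∧ w (-x) < 0) := by
  rw [mem_Icc]
  rcases lt_trichotomy x 0 with hx | rfl | hx
  · by_cases hxn : -n ≤ x
    · have := hw.apply_bounds (i := -x) (mem_Icc.2 ⟨by omega, by omega⟩)
      rw [← neg_neg x, hw.map_neg, neg_neg]
      omega
    · rw [hw.apply_of_lt_abs x (lt_abs.2 (by omega))]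
      omega
  · simp [hw.map_zero]
  · by_cases hxn : x ≤ n
    · have := hw.apply_bounds (i := x) (mem_Icc.2 ⟨by omega, hxn⟩)
      omega
    · rw [hw.apply_of_lt_abs x (lt_abs.2 (by omega))]
      omega

theorem image_inv_eq_of_neg_iff (hw : IsSignedPerm n w) (hw' : IsSignedPerm n w')
    (h : ∀ a ∈ Icc (1 : ℤ) n, w a < 0 ↔ w' a < 0) :
    (Icc (1 : ℤ) n).image ⇑w⁻¹ = (Icc (1 : ℤ) n).image ⇑w'⁻¹ := by
  have hmem : ∀ (v : Perm ℤ) (x : ℤ), x ∈ (Icc (1 : ℤ) n).image ⇑v⁻¹ ↔ v x ∈ Icc (1 : ℤ) n :=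
    fun v x => by simp [Equiv.symm_apply_eq]
  have h' : ∀ a : ℤ, 0 < a → a ≤ n → (w a < 0 ↔ w' a < 0) :=
    fun a h₁ h₂ => h a (mem_Icc.2 ⟨h₁, h₂⟩)
  ext x
  rw [hmem, hmem, hw.apply_mem_window_iff, hw'.apply_mem_window_iff]
  grind

theorem eq_of_partitionOf_eq (hw : IsMinCosetRep n w) (hw' : IsMinCosetRep n w')
    (h : partitionOf n w = partitionOf n w') : w = w' := by
  obtain ⟨hu, hs⟩ := isMinCosetRep_iff.1 hw
  obtain ⟨hu', hs'⟩ := isMinCosetRep_iff.1 hw'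
  refine inv_injective (eq_of_isRankSorted_of_image_eq hu hu' hs hs'
    (image_inv_eq_of_neg_iff (mem_closure_genC_iff.1 hw.1) (mem_closure_genC_iff.1 hw'.1)
      fun a ha => ?_))
  rw [mem_Icc] at ha
  have hpart := congrArg (((n : ℤ) + 1 - a).toNat ∈ ·) h
  simp only [partitionOf, mem_filter, mem_Icc, eq_iff_iff] at hpart
  rw [Int.toNat_of_nonneg (by omega), show (n : ℤ) + 1 - (n + 1 - a) = a by ring] at hpart
  exact and_congr_right_iff.1 hpart (by omega)

end Partition

def negateOn (T : Finset ℤ) : Perm ℤ where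
  toFun x := if |x| ∈ T then -x else x
  invFun x := if |x| ∈ T then -x else x
  left_inv x := by by_cases hx : |x| ∈ T <;> simp [hx]
  right_inv x := by by_cases hx : |x| ∈ T <;> simp [hx]

section Existence

variable {n : ℕ} {u : Perm ℤ}

theorem negateOn_apply (T : Finset ℤ) (x : ℤ) : negateOn T x = if |x| ∈ T then -x else x := rfl

theorem negateOn_inv (T : Finset ℤ) : (negateOn T)⁻¹ = negateOn T := rfl

theorem negateOn_neg_iff (T : Finset ℤ) {a : ℤ} (ha : 0 < a) : negateOn T a < 0 ↔ a ∈ T := by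
  rw [negateOn_apply, abs_of_pos ha]
  split_ifs with h <;> simp only [h, iff_true, iff_false] <;> omega

theorem isSignedPerm_negateOn {T : Finset ℤ} (hT : ∀ a ∈ T, a ≤ n) :
    IsSignedPerm n (negateOn T) := by
  refine ⟨fun x => ?_, fun x hx => ?_⟩ <;> simp only [negateOn_apply, abs_neg]
  · split_ifs <;> rfl
  · exact if_neg fun h => (hT _ h).not_gt hx

theorem sgnSwap_neg_iff {i : ℕ} (hi : 1 ≤ i) (x : ℤ) : sgnSwap i x < 0 ↔ x < 0 := by
  simp only [sgnSwap, Perm.mul_apply, swap_apply_def]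
  split_ifs <;> omega

/-- Bubble sort: swapping the values at a descent lowers `invCount` and keeps the sign of every
value. -/
theorem exists_isRankSorted_inv_neg_iff (hu : IsSignedPerm n u) :
    ∃ v, IsSignedPerm n v ∧ IsRankSorted n v ∧ ∀ x, (v⁻¹ x < 0 ↔ u⁻¹ x < 0) := by
  induction hk : invCount n u using Nat.strong_induction_on generalizing u with
  | _ k ih =>
  by_cases hs : IsRankSorted n u
  · exact ⟨u, hu, hs, fun _ => Iff.rfl⟩
  obtain ⟨i, hi₁, hi₂, hdes⟩ :
      ∃ i : ℕ, 1 ≤ i ∧ i + 1 ≤ n ∧ rank n (u (i + 1)) < rank n (u i) := by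
    simp only [isRankSorted_iff, not_forall, not_lt] at hs
    obtain ⟨i, hi₁, hi₂, h⟩ := hs
    exact ⟨i, hi₁, hi₂, lt_of_le_of_ne h
      (rank_apply_ne hu (by simp; omega) (by simp; omega) (by omega))⟩
  have hg : sgnSwap i ∈ genC n := Or.inl ⟨i, hi₁, hi₂, rfl⟩
  obtain ⟨v, hv, hsv, hsign⟩ := ih _
    (by have := invCount_mul_sgnSwap_of_rank_gt hu hi₁ hi₂ hdes; omega)
    (hu.mul (isSignedPerm_of_mem_genC hg)) rfl
  refine ⟨v, hv, hsv, fun x => (hsign x).trans ?_⟩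
  rw [mul_inv_rev, Perm.mul_apply, genC_inv hg, sgnSwap_neg_iff hi₁]

theorem exists_partitionOf_eq {S : Finset ℕ} (hS : ∀ s ∈ S, 1 ≤ s ∧ s ≤ n) :
    ∃ w, IsMinCosetRep n w ∧ partitionOf n w = S := by
  set T := S.image fun s : ℕ => (n : ℤ) + 1 - s
  have hT : ∀ a ∈ T, a ≤ n := by
    simp only [T, mem_image, forall_exists_index, and_imp, forall_apply_eq_imp_iff₂]
    intro s hs
    have := hS s hs
    omega
  obtain ⟨v, hv, hs, hsign⟩ := exists_isRankSorted_inv_neg_iff (isSignedPerm_negateOn hT)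
  refine ⟨v⁻¹, isMinCosetRep_iff.2 (by rw [inv_inv]; exact ⟨hv, hs⟩), ?_⟩
  ext s
  simp only [partitionOf, mem_filter, mem_Icc, hsign, negateOn_inv]
  constructor
  · rintro ⟨hs₁, hs₂⟩
    obtain ⟨t, ht, he⟩ := mem_image.1 ((negateOn_neg_iff T (by omega)).1 hs₂)
    rwa [show t = s by omega] at ht
  · intro h
    have := hS s h
    exact ⟨this, (negateOn_neg_iff T (by omega)).2 (mem_image_of_mem _ h)⟩

end Existence

end Hyperoctahedral

open Hyperoctahedral

theorem Cn_reps_biject_strict_partitions_general (n l : ℕ) :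
    Nonempty
      ({w : Equiv.Perm ℤ // w ∈ Subgroup.closure (genC n) ∧
          (∀ i : ℕ, 1 ≤ i → i + 1 ≤ n →
            wordLen (genC n) w < wordLen (genC n) (sgnSwap i * w)) ∧
          wordLen (genC n) w = l} ≃
        {S : Finset ℕ // (∀ x ∈ S, 1 ≤ x ∧ x ≤ n) ∧ ∑ x ∈ S, x = l}) := by
  refine ⟨Equiv.ofBijective (fun w => ⟨partitionOf n w,
    fun s hs => mem_Icc.1 (mem_filter.1 hs).1,
    (wordLen_eq_sum_partitionOf ⟨w.2.1, w.2.2.1⟩).symm.trans w.2.2.2⟩) ⟨?_, ?_⟩⟩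
  · intro w w' h
    exact Subtype.ext (eq_of_partitionOf_eq ⟨w.2.1, w.2.2.1⟩ ⟨w'.2.1, w'.2.2.1⟩
      (congrArg Subtype.val h))
  · rintro ⟨S, hS, hsum⟩
    obtain ⟨w, hw, rfl⟩ := exists_partitionOf_eq hS
    exact ⟨⟨w, hw.1, hw.2, (wordLen_eq_sum_partitionOf hw).trans hsum⟩, rfl⟩

/-- There is a bijection between the minimal coset representatives of `C_n/A_(n-1)`
of length `ℓ` (elements `w` of `C_n` with `ℓ(sw) > ℓ(w)` for every generator `s` of the
parabolic subgroup `A_(n-1) = ⟨s_1, …, s_(n-1)⟩`) and the strict partitions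
`λ_1 > λ_2 > ⋯ > λ_m > 0` with `λ_1 ≤ n` and `Σ λ_i = ℓ` (recorded as finsets of
positive integers `≤ n` with sum `ℓ`). -/
theorem Cn_reps_biject_strict_partitions (n l : ℕ) (hn : 1 ≤ n) :
    Nonempty
      ({w : Equiv.Perm ℤ // w ∈ Subgroup.closure (genC n) ∧
          (∀ i : ℕ, 1 ≤ i → i + 1 ≤ n →
            wordLen (genC n) w < wordLen (genC n) (sgnSwap i * w)) ∧
          wordLen (genC n) w = l} ≃
        {S : Finset ℕ // (∀ x ∈ S, 1 ≤ x ∧ x ≤ n) ∧ ∑ x ∈ S, x = l}) :=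
  Cn_reps_biject_strict_partitions_general n l
end

section
/- For the symmetric group S_{n+1} with J = S \ {s_p}, an element u of the quotient poset W^J is covered by su (for simple reflection s) in Bruhat order if and only if an s-labeled box can be appended to the diagram of u to form a new valid subdiagram; equivalently, covers in Bruhat order on W^J correspond exactly to adding a single box in Young's lattice restricted to the p × (n+1-p) rectangle. -/
open Equiv Finset

/-- The number of inversions of a permutation of `Fin m`; this is its Coxeter length
in the symmetric group `A_(m-1)`. -/
def invNum {m : ℕ} (w : Equiv.Perm (Fin m)) : ℕ :=
  ((Finset.univ : Finset (Fin m × Fin m)).filter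
    (fun p => p.1 < p.2 ∧ w p.2 < w p.1)).card

/-- The strong Bruhat order on the symmetric group: the reflexive-transitive closure
of the relation "multiply by a reflection (a transposition) and increase the length". -/
def bruhatLE {m : ℕ} (u v : Equiv.Perm (Fin m)) : Prop :=
  Relation.ReflTransGen
    (fun x y => invNum x < invNum y ∧ ∃ a b : Fin m, a ≠ b ∧ y = x * Equiv.swap a b)
    u v

/-!
A Grassmannian permutation `w` is determined by its increasing second block
`w p < w (p + 1) < ⋯`, and column `j` of its partition is `p + j - w (p + j)`.

A Bruhat step `x ↦ x * swap a b` with `a < b` raises the length only if `x a < x b`, so it can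
only lower values in the second block: for every `t`, the number of second-block entries below
`t` never decreases along a Bruhat chain, which forces the partitions to grow. Conversely, adding a box in
column `j` is the swap of the value `w (p + j)` with the value `w (p + j) - 1`, which then lies in
the first block; swapping two adjacent values raises the length by exactly one. So containment
of partitions is realised by a chain of such swaps, and a Bruhat cover adds exactly one box.
-/

theorem Fin.val_apply_add_sub_le_of_strictMono {k m : ℕ} {g : Fin k → Fin m} (hg : StrictMono g)
    {i j : Fin k} (hij : i ≤ j) : (g i : ℕ) + (j - i) ≤ g j := by
  have := card_le_card_of_injOn g (fun x hx => ?_) hg.injective.injOn (s := Icc i j)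
    (t := Icc (g i) (g j))
  · simp only [Fin.card_Icc] at this
    have := hg.monotone hij
    rw [Fin.le_def] at this hij
    omega
  · simp only [coe_Icc, Set.mem_Icc] at hx ⊢
    exact ⟨hg.monotone hx.1, hg.monotone hx.2⟩

theorem Fintype.sum_update_add {ι M : Type*} [Fintype ι] [DecidableEq ι] [AddCommMonoid M]
    (F : ι → M) (j : ι) (c : M) : ∑ i, Function.update F j (F j + c) i = ∑ i, F i + c := by
  rw [sum_update_of_mem (mem_univ j), sum_eq_add_sum_sdiff_singleton_of_mem (mem_univ j) F,
    add_right_comm]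

theorem exists_antitone_update_add_one_le {ι : Type*} [LinearOrder ι] [WellFoundedLT ι]
    {F G : ι → ℕ} (hF : Antitone F) (hG : Antitone G) (hFG : F < G) :
    ∃ j, Antitone (Function.update F j (F j + 1)) ∧ Function.update F j (F j + 1) ≤ G := by
  obtain ⟨hle, hex⟩ := Pi.lt_def.1 hFG
  obtain ⟨j, hj, hmin⟩ := wellFounded_lt.has_min {j | F j < G j} hex
  replace hj : F j < G j := hj
  refine ⟨j, fun i k hik => ?_, fun i => ?_⟩
  · by_cases hi : i = j <;> by_cases hk : k = j
    · simp [hi, hk]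
    · subst hi
      simpa [hk] using (hF hik).trans (Nat.le_succ _)
    · subst hk
      have hGF : G i ≤ F i := not_lt.1 fun h => hmin i h (lt_of_le_of_ne hik hi)
      simp only [Function.update_self, Function.update_of_ne hi]
      have := hG hik
      omega
    · simpa [hi, hk] using hF hik
  · rcases eq_or_ne i j with rfl | hi
    · simpa using hj
    · simpa [hi] using hle i

section Inversions

variable {m : ℕ}

def inversions (w : Perm (Fin m)) : Finset (Fin m × Fin m) :=
  univ.filter fun q => q.1 < q.2 ∧ w q.2 < w q.1

@[simp]
theorem mem_inversions {w : Perm (Fin m)} {q : Fin m × Fin m} :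
    q ∈ inversions w ↔ q.1 < q.2 ∧ w q.2 < w q.1 := by
  simp [inversions]

theorem invNum_eq_card_inversions (w : Perm (Fin m)) : invNum w = #(inversions w) := rfl

theorem invNum_lt_mul_swap {z : Perm (Fin m)} {a b : Fin m} (hab : a < b) (hz : z a < z b) :
    invNum z < invNum (z * swap a b) := by
  set s := swap a b
  have hss : ∀ x, s (s x) = x := swap_apply_self a b
  -- An injection of inversions missing `(a, b)`: `(i, j) ↦ (s i, s j)`, unless `s` reverses
  -- the order of `i < j`. That happens only when one of `i, j` is `a` or `b` and the other lies
  -- strictly between them, and then `(i, j)` itself is still an inversion, as `z a < z b`.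
  let φ : Fin m × Fin m → Fin m × Fin m := fun q => if s q.1 < s q.2 then (s q.1, s q.2) else q
  have hmaps : ∀ q ∈ inversions z, φ q ∈ inversions (z * s) := by
    rintro ⟨i, j⟩ hq
    simp only [mem_inversions] at hq
    simp only [φ, s]
    split_ifs with h
    · simp [h, hq.2]
    · simp only [mem_inversions, Perm.mul_apply, swap_apply_def] at h ⊢
      refine ⟨hq.1, ?_⟩
      split_ifs at h ⊢ <;> subst_vars <;> grind
  have hinv : ∀ q ∈ inversions z, φ (φ q) = q := by
    rintro ⟨i, j⟩ hq
    simp only [mem_inversions] at hq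
    by_cases h : s i < s j <;> simp [φ, h, hq.1, hss]
  have hnew : (a, b) ∉ (inversions z).image φ := by
    simp only [mem_image, mem_inversions, not_exists, not_and, Prod.forall]
    rintro i j ⟨hij, hji⟩ h
    by_cases hs : s i < s j <;> simp only [φ, hs, if_true, if_false, Prod.ext_iff] at h
    · rw [← hss i, ← hss j, h.1, h.2] at hij
      simp [s, hab.not_gt] at hij
    · rw [h.1, h.2] at hji
      exact hji.not_gt hz
  calc invNum z = #((inversions z).image φ) :=
        (card_image_of_injOn (Set.LeftInvOn.injOn hinv)).symm
    _ < #(inversions (z * s)) := by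
      refine card_lt_card ((ssubset_iff_of_subset ?_).2 ⟨(a, b), ?_, hnew⟩)
      · exact image_subset_iff.2 hmaps
      · simp [s, hab, hz]

theorem apply_lt_apply_of_invNum_lt_mul_swap {z : Perm (Fin m)} {a b : Fin m} (hab : a < b)
    (h : invNum z < invNum (z * swap a b)) : z a < z b := by
  refine (lt_or_gt_of_ne (z.injective.ne hab.ne)).resolve_right fun hba => ?_
  have := invNum_lt_mul_swap (z := z * swap a b) hab (by simpa using hba)
  rw [mul_assoc, swap_mul_self, mul_one] at this
  exact this.not_gt h

theorem mul_swap_apply_lt_mul_swap_apply_iff {z : Perm (Fin m)} {a b : Fin m}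
    (hadj : (z a : ℕ) + 1 = z b) {i k : Fin m} (hik : ¬(i = a ∧ k = b))
    (hki : ¬(i = b ∧ k = a)) :
    (z * swap a b) i < (z * swap a b) k ↔ z i < z k := by
  have hne : ∀ x y, x ≠ y → (z x : ℕ) ≠ z y := fun _ _ h =>
    Fin.val_ne_of_ne (z.injective.ne h)
  simp only [Perm.mul_apply, swap_apply_def, Fin.lt_def]
  split_ifs <;> grind

theorem invNum_mul_swap_of_adjacent {z : Perm (Fin m)} {a b : Fin m} (hab : a < b)
    (hadj : (z a : ℕ) + 1 = z b) : invNum (z * swap a b) = invNum z + 1 := by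
  have hz : z a < z b := Fin.lt_def.2 (by omega)
  have : inversions (z * swap a b) = insert (a, b) (inversions z) := by
    ext ⟨i, k⟩
    by_cases hik : i = a ∧ k = b
    · obtain ⟨rfl, rfl⟩ := hik
      simp [hab, hz]
    · by_cases hki : i = b ∧ k = a
      · obtain ⟨rfl, rfl⟩ := hki
        simp [hab.not_gt, Prod.ext_iff, hab.ne']
      · have := mul_swap_apply_lt_mul_swap_apply_iff hadj (i := k) (k := i)
          (fun h => hki ⟨h.2, h.1⟩) (fun h => hik ⟨h.2, h.1⟩)
        simp_all [Prod.ext_iff]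
  rw [invNum_eq_card_inversions, this, card_insert_of_notMem (by simp [hz.not_gt]),
    invNum_eq_card_inversions]

theorem bruhatLE.eq_or_invNum_lt {u v : Perm (Fin m)} (h : bruhatLE u v) :
    u = v ∨ invNum u < invNum v := by
  induction h with
  | refl => exact .inl rfl
  | tail _ hstep ih => exact .inr (ih.elim (· ▸ hstep.1) (·.trans hstep.1))

end Inversions

section Grassmannian

variable {m p : ℕ}

def tailPos (p : ℕ) {m : ℕ} : Fin (m - p) ↪o Fin m :=
  OrderEmbedding.ofStrictMono (fun j => ⟨p + j, by omega⟩) fun _ _ h =>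
    Nat.add_lt_add_left h p

@[simp]
theorem val_tailPos (j : Fin (m - p)) : (tailPos p j : ℕ) = p + j := rfl

theorem exists_tailPos_eq {k : Fin m} (hk : p ≤ k) : ∃ j, tailPos p j = k :=
  ⟨⟨k - p, by omega⟩, Fin.ext (by simp; omega)⟩

def IsGrassmannian (p : ℕ) {m : ℕ} (w : Perm (Fin m)) : Prop :=
  (∀ i j : Fin m, i < j → (j : ℕ) < p → w i < w j) ∧
    (∀ i j : Fin m, p ≤ (i : ℕ) → i < j → w i < w j)

/-- Column `j` of the partition of `w`. For Grassmannian `w` it counts the first-block entries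
above `w (p + j)`, since exactly `j` second-block entries lie below it. -/
def shape (p : ℕ) {m : ℕ} (w : Perm (Fin m)) (j : Fin (m - p)) : ℕ :=
  p + j - w (tailPos p j)

theorem shape_one (j : Fin (m - p)) : shape p 1 j = 0 := by
  simp [shape]

theorem isGrassmannian_one : IsGrassmannian p (1 : Perm (Fin m)) :=
  ⟨fun _ _ h _ => h, fun _ _ _ h => h⟩

namespace IsGrassmannian

variable {w : Perm (Fin m)}

theorem strictMono_tail (hw : IsGrassmannian p w) : StrictMono (w ∘ tailPos p) :=
  fun _ _ h => hw.2 _ _ (by simp) ((tailPos p).strictMono h)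

theorem apply_tailPos_add_sub_le (hw : IsGrassmannian p w) {i j : Fin (m - p)} (hij : i ≤ j) :
    (w (tailPos p i) : ℕ) + (j - i) ≤ w (tailPos p j) :=
  Fin.val_apply_add_sub_le_of_strictMono hw.strictMono_tail hij

theorem le_apply_tailPos (hw : IsGrassmannian p w) (j : Fin (m - p)) :
    (j : ℕ) ≤ w (tailPos p j) := by
  have := hw.apply_tailPos_add_sub_le (i := ⟨0, j.pos⟩) (j := j) (Nat.zero_le _)
  dsimp only at this
  omega

theorem apply_tailPos_le (hw : IsGrassmannian p w) (j : Fin (m - p)) :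
    (w (tailPos p j) : ℕ) ≤ p + j := by
  have hlast : m - p - 1 < m - p := by have := j.isLt; omega
  have := hw.apply_tailPos_add_sub_le (i := j) (j := ⟨m - p - 1, hlast⟩)
    (Fin.le_def.2 (Nat.le_sub_one_of_lt j.isLt))
  have := (w (tailPos p ⟨m - p - 1, hlast⟩)).isLt
  dsimp only at *
  omega

theorem shape_le (hw : IsGrassmannian p w) (j : Fin (m - p)) : shape p w j ≤ p := by
  have := hw.le_apply_tailPos j
  unfold shape
  omega

theorem antitone_shape (hw : IsGrassmannian p w) : Antitone (shape p w) := fun i j hij => by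
  have := hw.apply_tailPos_add_sub_le hij
  unfold shape
  omega

theorem strictMono_head (hw : IsGrassmannian p w) :
    StrictMono fun i : {i : Fin m // (i : ℕ) < p} => w i :=
  fun _ k hik => hw.1 _ _ hik k.2

theorem eq_of_shape_eq (hw : IsGrassmannian p w) {v : Perm (Fin m)} (hv : IsGrassmannian p v)
    (h : shape p w = shape p v) : w = v := by
  have htail : ∀ k : Fin m, p ≤ k → w k = v k := by
    intro k hk
    obtain ⟨j, rfl⟩ := exists_tailPos_eq hk
    have := congrFun h j
    have := hw.apply_tailPos_le j
    have := hv.apply_tailPos_le j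
    unfold shape at *
    omega
  have hhead : (fun i : {i : Fin m // (i : ℕ) < p} => w i) =
      fun i : {i : Fin m // (i : ℕ) < p} => v i := by
    refine (hw.strictMono_head.range_inj hv.strictMono_head).1 ?_
    have hrange (u : Perm (Fin m)) : Set.range (fun i : {i : Fin m // (i : ℕ) < p} => u i)
        = (u '' {k | p ≤ (k : ℕ)})ᶜ := by
      rw [← Equiv.image_compl]
      ext x
      simp only [Set.mem_range, Subtype.exists, Set.mem_image, Set.mem_compl_iff,
        Set.mem_ofPred_eq, not_le, exists_prop]
    rw [hrange, hrange, Set.image_congr (s := {k : Fin m | p ≤ (k : ℕ)}) fun k hk => htail k hk]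
  ext k
  by_cases hk : (k : ℕ) < p
  · exact congrArg Fin.val (congrFun hhead (⟨k, hk⟩ : {i : Fin m // (i : ℕ) < p}))
  · rw [htail k (not_lt.1 hk)]

end IsGrassmannian

theorem IsGrassmannian.mul_swap {u : Perm (Fin m)} (hu : IsGrassmannian p u) {a b : Fin m}
    (ha : (a : ℕ) < p) (hb : p ≤ (b : ℕ)) (hadj : (u a : ℕ) + 1 = u b) :
    IsGrassmannian p (u * swap a b) := by
  constructor
  · intro i k hik hk
    rw [mul_swap_apply_lt_mul_swap_apply_iff hadj (by omega) (by grind [Fin.lt_def])]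
    exact hu.1 i k hik hk
  · intro i k hi hik
    rw [mul_swap_apply_lt_mul_swap_apply_iff hadj (by omega) (by grind [Fin.lt_def])]
    exact hu.2 i k hi hik

theorem shape_mul_swap_tailPos (u : Perm (Fin m)) {a : Fin m} (ha : (a : ℕ) < p)
    (j₀ : Fin (m - p)) :
    shape p (u * swap a (tailPos p j₀)) = Function.update (shape p u) j₀ (p + j₀ - u a) := by
  ext j
  rcases eq_or_ne j j₀ with rfl | hj
  · simp [shape]
  · have hja : tailPos p j ≠ a := Fin.ne_of_val_ne (by simp; omega)
    simp [shape, hj, swap_apply_of_ne_of_ne hja ((tailPos p).injective.ne hj)]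

theorem IsGrassmannian.exists_mul_swap_shape_eq_update {u : Perm (Fin m)}
    (hu : IsGrassmannian p u) {j₀ : Fin (m - p)} (hj₀ : shape p u j₀ < p)
    (hanti : Antitone (Function.update (shape p u) j₀ (shape p u j₀ + 1))) :
    ∃ a b : Fin m, a < b ∧ IsGrassmannian p (u * swap a b) ∧
      shape p (u * swap a b) = Function.update (shape p u) j₀ (shape p u j₀ + 1) ∧
      invNum (u * swap a b) = invNum u + 1 := by
  have hshape : shape p u j₀ = p + j₀ - u (tailPos p j₀) := rfl
  have hb_le := hu.apply_tailPos_le j₀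
  have hb_pos : 0 < (u (tailPos p j₀) : ℕ) := by omega
  obtain ⟨a, hadj⟩ : ∃ a, (u a : ℕ) + 1 = u (tailPos p j₀) :=
    ⟨u.symm ⟨u (tailPos p j₀) - 1, by omega⟩, by simp; omega⟩
  -- In the second block, `a = p + j` would force `j + 1 = j₀` and columns `j`, `j₀` of equal
  -- length, leaving no room for the new box.
  have ha : (a : ℕ) < p := by
    by_contra! ha
    obtain ⟨j, rfl⟩ := exists_tailPos_eq ha
    have hjj₀ : j < j₀ := hu.strictMono_tail.lt_iff_lt.1 <| Fin.lt_def.2 <| by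
      simp only [Function.comp_apply]
      omega
    have := hanti hjj₀.le
    simp only [Function.update_self, Function.update_of_ne hjj₀.ne] at this
    have : shape p u j = p + j - u (tailPos p j) := rfl
    have := Fin.lt_def.1 hjj₀
    omega
  have hab : a < tailPos p j₀ := Fin.lt_def.2 (by simp; omega)
  refine ⟨a, _, hab, hu.mul_swap ha (by simp) hadj, ?_, invNum_mul_swap_of_adjacent hab hadj⟩
  rw [shape_mul_swap_tailPos u ha]
  congr 1
  omega

end Grassmannian

section Bruhat

variable {m p : ℕ}

def tailCount (p : ℕ) {m : ℕ} (w : Perm (Fin m)) (t : Fin m) : ℕ :=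
  #{k : Fin m | p ≤ (k : ℕ) ∧ w k < t}

theorem tailCount_le_mul_swap {z : Perm (Fin m)} {a b : Fin m} (hab : a < b) (hz : z a < z b)
    (t : Fin m) : tailCount p z t ≤ tailCount p (z * swap a b) t := by
  set s := swap a b
  have hss : ∀ x, s (s x) = x := swap_apply_self a b
  -- `k ↦ s k`, unless this leaves the second block (only for `k = b` with `a` in the first
  -- block); then `k` itself still counts, as `z a < z b`.
  let φ : Fin m → Fin m := fun k => if p ≤ (s k : ℕ) then s k else k
  refine card_le_card_of_injOn φ (fun k hk => ?_)
    (Set.LeftInvOn.injOn (f₁' := φ) fun k hk => ?_)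
  · simp only [coe_filter, mem_univ, true_and, Set.mem_ofPred_eq] at hk ⊢
    simp only [φ, Perm.mul_apply]
    split_ifs with h
    · simp [hss, h, hk.2]
    · simp only [s, swap_apply_def] at h ⊢
      split_ifs at h ⊢ <;> grind [Fin.lt_def]
  · simp only [coe_filter, mem_univ, true_and, Set.mem_ofPred_eq] at hk
    by_cases h : p ≤ (s k : ℕ) <;> simp [φ, h, hss, hk.1]

theorem tailCount_le_of_bruhatLE {u v : Perm (Fin m)} (h : bruhatLE u v) (t : Fin m) :
    tailCount p u t ≤ tailCount p v t := by
  induction h with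
  | refl => rfl
  | tail _ hstep ih =>
    obtain ⟨hlt, a, b, hab, rfl⟩ := hstep
    refine ih.trans ?_
    rcases hab.lt_or_gt with hab | hba
    · exact tailCount_le_mul_swap hab (apply_lt_apply_of_invNum_lt_mul_swap hab hlt) t
    · rw [swap_comm] at hlt ⊢
      exact tailCount_le_mul_swap hba (apply_lt_apply_of_invNum_lt_mul_swap hba hlt) t

theorem IsGrassmannian.shape_le_of_bruhatLE {u v : Perm (Fin m)} (hu : IsGrassmannian p u)
    (hv : IsGrassmannian p v) (h : bruhatLE u v) : shape p u ≤ shape p v := by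
  intro j
  suffices v (tailPos p j) ≤ u (tailPos p j) from Nat.sub_le_sub_left this _
  by_contra! hlt
  have hu_count : j + 1 ≤ tailCount p u (v (tailPos p j)) := by
    calc (j : ℕ) + 1 = #((Iic j).map (tailPos p).toEmbedding) := by simp
      _ ≤ _ := card_le_card fun k hk => by
        obtain ⟨i, hi, rfl⟩ := mem_map.1 hk
        simp only [mem_filter, mem_univ, true_and]
        exact ⟨by simp, (hu.strictMono_tail.monotone (mem_Iic.1 hi)).trans_lt hlt⟩
  have hv_count : tailCount p v (v (tailPos p j)) ≤ j := by
    calc tailCount p v (v (tailPos p j)) ≤ #((Iio j).map (tailPos p).toEmbedding) :=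
          card_le_card fun k hk => by
            simp only [mem_filter, mem_univ, true_and] at hk
            obtain ⟨i, rfl⟩ := exists_tailPos_eq hk.1
            exact mem_map_of_mem _ (mem_Iio.2 (hv.strictMono_tail.lt_iff_lt.1 hk.2))
      _ = j := by simp
  have := tailCount_le_of_bruhatLE (p := p) h (v (tailPos p j))
  omega

end Bruhat

section Covers

variable {m p : ℕ}

theorem IsGrassmannian.exists_mul_swap_of_shape_lt {u : Perm (Fin m)} (hu : IsGrassmannian p u)
    {F : Fin (m - p) → ℕ} (hF : Antitone F) (hFp : ∀ j, F j ≤ p) (huF : shape p u < F) :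
    ∃ a b : Fin m, a < b ∧ IsGrassmannian p (u * swap a b) ∧ shape p (u * swap a b) ≤ F ∧
      ∑ j, shape p (u * swap a b) j = ∑ j, shape p u j + 1 ∧
      invNum (u * swap a b) = invNum u + 1 := by
  obtain ⟨j₀, hanti, hle⟩ := exists_antitone_update_add_one_le hu.antitone_shape hF huF
  have hj₀ : shape p u j₀ < p := by simpa using (hle j₀).trans (hFp j₀)
  obtain ⟨a, b, hab, hw, hshape, hinv⟩ := hu.exists_mul_swap_shape_eq_update hj₀ hanti
  exact ⟨a, b, hab, hw, hshape ▸ hle, by rw [hshape, Fintype.sum_update_add], hinv⟩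

theorem IsGrassmannian.exists_bruhatLE_shape_eq {u : Perm (Fin m)} (hu : IsGrassmannian p u)
    {F : Fin (m - p) → ℕ} (hF : Antitone F) (hFp : ∀ j, F j ≤ p) (huF : shape p u ≤ F) :
    ∃ v, IsGrassmannian p v ∧ shape p v = F ∧ bruhatLE u v := by
  induction hd : ∑ j, F j - ∑ j, shape p u j generalizing u with
  | zero =>
    refine ⟨u, hu, huF.eq_of_not_lt fun hlt => ?_, .refl⟩
    have : ∑ j, shape p u j < ∑ j, F j := Fintype.sum_strictMono hlt
    omega
  | succ d ih =>
    obtain ⟨a, b, hab, hw, hwF, hsum, hinv⟩ :=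
      hu.exists_mul_swap_of_shape_lt hF hFp (huF.lt_of_ne (by rintro rfl; simp at hd))
    obtain ⟨v, hv, rfl, hwv⟩ := ih hw hwF (by omega)
    exact ⟨v, hv, rfl, .head ⟨by omega, a, b, hab.ne, rfl⟩ hwv⟩

theorem bruhat_cover_iff_shape (u v : {w : Perm (Fin m) // IsGrassmannian p w}) :
    (bruhatLE u.1 v.1 ∧ u ≠ v ∧ ∀ w : {w : Perm (Fin m) // IsGrassmannian p w},
        bruhatLE u.1 w.1 → bruhatLE w.1 v.1 → w = u ∨ w = v) ↔
      shape p u.1 ≤ shape p v.1 ∧ ∑ j, shape p v.1 j = ∑ j, shape p u.1 j + 1 := by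
  obtain ⟨u, hu⟩ := u
  obtain ⟨v, hv⟩ := v
  dsimp only
  constructor
  · rintro ⟨huv, hne, hcover⟩
    have hle := hu.shape_le_of_bruhatLE hv huv
    obtain ⟨a, b, hab, hw, hwv, hsum, hinv⟩ := hu.exists_mul_swap_of_shape_lt hv.antitone_shape
      hv.shape_le (hle.lt_of_ne fun h => hne (Subtype.ext (hu.eq_of_shape_eq hv h)))
    obtain ⟨v', hv', hv'v, hwv'⟩ :=
      hw.exists_bruhatLE_shape_eq hv.antitone_shape hv.shape_le hwv
    obtain rfl := hv'.eq_of_shape_eq hv hv'v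
    have huw : bruhatLE u (u * swap a b) := .single ⟨by omega, a, b, hab.ne, rfl⟩
    rcases hcover ⟨_, hw⟩ huw hwv' with hwu | hwv
    · rw [Subtype.mk.injEq] at hwu
      rw [hwu] at hsum
      omega
    · rw [Subtype.mk.injEq] at hwv
      exact ⟨hle, hwv ▸ hsum⟩
  · rintro ⟨hle, hsum⟩
    obtain ⟨a, b, hab, hw, hwv, hsum', hinv⟩ := hu.exists_mul_swap_of_shape_lt hv.antitone_shape
      hv.shape_le (hle.lt_of_ne fun h => by rw [h] at hsum; omega)
    obtain rfl : u * swap a b = v := hw.eq_of_shape_eq hv <| hwv.eq_of_not_lt fun h => by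
      have : ∑ j, shape p (u * swap a b) j < ∑ j, shape p v j := Fintype.sum_strictMono h
      omega
    refine ⟨.single ⟨by omega, a, b, hab.ne, rfl⟩, fun h => ?_, fun w huw hwv => ?_⟩
    · rw [Subtype.mk.injEq] at h
      rw [← h] at hinv
      omega
    · rcases huw.eq_or_invNum_lt with huw | huw
      · exact .inl (Subtype.ext huw.symm)
      rcases hwv.eq_or_invNum_lt with hwv | hwv
      · exact .inr (Subtype.ext hwv)
      omega

def toPartition (w : {w : Perm (Fin m) // IsGrassmannian p w}) :
    {f : Fin (m - p) → Fin (p + 1) // Antitone f} :=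
  ⟨fun j => ⟨shape p w.1 j, Nat.lt_succ_of_le (w.2.shape_le j)⟩,
    fun _ _ h => w.2.antitone_shape h⟩

theorem toPartition_bijective : Function.Bijective (toPartition (m := m) (p := p)) := by
  refine ⟨fun u v h => Subtype.ext (u.2.eq_of_shape_eq v.2 ?_), fun f => ?_⟩
  · exact funext fun j => congrArg Fin.val (congrFun (congrArg Subtype.val h) j)
  · obtain ⟨v, hv, hshape, -⟩ := isGrassmannian_one.exists_bruhatLE_shape_eq
      (F := fun j => (f.1 j : ℕ)) (fun _ _ h => f.2 h) (fun j => Nat.le_of_lt_succ (f.1 j).2)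
      (fun j => by simp [shape_one])
    exact ⟨⟨v, hv⟩, Subtype.ext (funext fun j => Fin.ext (congrFun hshape j))⟩

end Covers

theorem bruhat_covers_are_box_additions_general (n p : ℕ) :
    ∃ e : {w : Equiv.Perm (Fin (n + 1)) //
            (∀ i j : Fin (n + 1), i < j → (j : ℕ) < p → w i < w j) ∧
            (∀ i j : Fin (n + 1), p ≤ (i : ℕ) → i < j → w i < w j)} ≃
          {f : Fin (n + 1 - p) → Fin (p + 1) // Antitone f},
      ∀ u v,
        (bruhatLE u.1 v.1 ∧ u ≠ v ∧
          ∀ w, bruhatLE u.1 w.1 → bruhatLE w.1 v.1 → w = u ∨ w = v) ↔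
        ((∀ i, (e u).1 i ≤ (e v).1 i) ∧
          ∑ i, ((e v).1 i : ℕ) = (∑ i, ((e u).1 i : ℕ)) + 1) :=
  ⟨.ofBijective _ toPartition_bijective, bruhat_cover_iff_shape⟩

/-- For the symmetric group `S_(n+1)` with `J = S \ {s_p}`, the covering relations of
the Bruhat order on the quotient `W^J = A_n/(A_(p-1)×A_(n-p))` (whose elements are the
permutations increasing on positions `1..p` and `p+1..n+1`) correspond, under the
sorting bijection with partitions inside a `p × (n+1-p)` rectangle (antitone vectors of
part sizes), exactly to adding a single box in Young's lattice restricted to the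
rectangle: `u` is covered by `v` in Bruhat order iff the partition of `v` contains the
partition of `u` and has exactly one more box.  (Equivalently, a single labeled box can
be appended to the diagram of `u` to form a new valid subdiagram.) -/
theorem bruhat_covers_are_box_additions (n p : ℕ) (hp : 1 ≤ p) (hpn : p ≤ n) :
    ∃ e : {w : Equiv.Perm (Fin (n + 1)) //
            (∀ i j : Fin (n + 1), i < j → (j : ℕ) < p → w i < w j) ∧
            (∀ i j : Fin (n + 1), p ≤ (i : ℕ) → i < j → w i < w j)} ≃
          {f : Fin (n + 1 - p) → Fin (p + 1) // Antitone f},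
      ∀ u v,
        (bruhatLE u.1 v.1 ∧ u ≠ v ∧
          ∀ w, bruhatLE u.1 w.1 → bruhatLE w.1 v.1 → w = u ∨ w = v) ↔
        ((∀ i, (e u).1 i ≤ (e v).1 i) ∧
          ∑ i, ((e v).1 i : ℕ) = (∑ i, ((e u).1 i : ℕ)) + 1) :=
  bruhat_covers_are_box_additions_general n p
end
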